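/- Under the hypotheses of the previous result applied at every iteration k = 0,...,N−1 (with the same α ∈ (0,1)), one has Σ_{k=0}^{N−1} ‖x̂_k − x_k‖² ≤ ‖x_0 − x*‖²/(1−α). -/

import Mathlib

/-!
Strong convexity and `∇f(x*) = 0` give `⟪∇f(x̂), x̂ - x*⟫ ≥ μ‖x̂ - x*‖²`. The update says
exactly that `(1 + 2ημ)(x_{k+1} - x̂_k) = -(x̂_k - x_k + η∇f(x̂_k))`, so the inexactness condition
bounds `(1 + 2ημ)‖x_{k+1} - x̂_k‖` by `α‖x̂_k - x_k‖`. Expanding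
`‖x_k - x*‖² - ‖x_{k+1} - x*‖²` and using these two facts yields the one-step descent
`‖x_{k+1} - x*‖² ≤ ‖x_k - x*‖² - (1 - α²)‖x̂_k - x_k‖²`; since `1 - α ≤ 1 - α²`, summing over
`k < N` telescopes to the claim.
-/

open InnerProductSpace RealInnerProductSpace

theorem ConvexOn.apply_sub_le_sub_of_hasFDerivAt {E : Type*} [NormedAddCommGroup E]
    [NormedSpace ℝ E] {h : E → ℝ} (hc : ConvexOn ℝ Set.univ h) {h' : E →L[ℝ] ℝ} {x : E}
    (hh : HasFDerivAt h h' x) (y : E) : h' (y - x) ≤ h y - h x := by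
  have hline : HasDerivAt (h ∘ AffineMap.lineMap x y) (h' (y - x)) (0 : ℝ) := by
    rw [← AffineMap.lineMap_apply_zero (k := ℝ) x y] at hh
    exact hh.comp_hasDerivAt (0 : ℝ) AffineMap.hasDerivAt_lineMap
  have hslope := (hc.comp_affineMap (AffineMap.lineMap x y)).le_slope_of_hasDerivAt
    (Set.mem_univ 0) (Set.mem_univ 1) one_pos hline
  simpa [slope_def_field] using hslope

section Gradient

variable {E : Type*} [NormedAddCommGroup E] [InnerProductSpace ℝ E] [CompleteSpace E]

theorem IsLocalMin.hasGradientAt_eq_zero {f : E → ℝ} {g x : E} (hmin : IsLocalMin f x)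
    (hg : HasGradientAt f g x) : g = 0 :=
  (toDual ℝ E).map_eq_zero_iff.mp (hmin.hasFDerivAt_eq_zero (hasGradientAt_iff_hasFDerivAt.mp hg))

theorem StrongConvexOn.inner_gradient_add_le_sub {f : E → ℝ} {μ : ℝ}
    (hf : StrongConvexOn Set.univ μ f) {g x : E} (hg : HasGradientAt f g x) (y : E) :
    ⟪g, y - x⟫ + μ / 2 * ‖y - x‖ ^ 2 ≤ f y - f x := by
  have hconv := (strongConvexOn_iff_convex.mp hf).apply_sub_le_sub_of_hasFDerivAt
    ((hasGradientAt_iff_hasFDerivAt.mp hg).sub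
      ((hasStrictFDerivAt_norm_sq x).hasFDerivAt.const_mul (μ / 2))) y
  have hsq : ‖y - x‖ ^ 2 = ‖y‖ ^ 2 - ‖x‖ ^ 2 - 2 * ⟪x, y - x⟫ := by
    rw [norm_sub_sq_real, inner_sub_right, real_inner_self_eq_norm_sq, real_inner_comm]; ring
  simp only [sub_apply, toDual_apply_apply, smul_apply,
    innerSL_apply_apply, smul_eq_mul, nsmul_eq_mul] at hconv
  rw [hsq]
  linarith

theorem StrongConvexOn.mul_norm_sub_sq_le_inner_gradient_sub {f : E → ℝ} {μ : ℝ}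
    (hf : StrongConvexOn Set.univ μ f) {g g' x y : E} (hg : HasGradientAt f g x)
    (hg' : HasGradientAt f g' y) : μ * ‖x - y‖ ^ 2 ≤ ⟪g - g', x - y⟫ := by
  have hxy := hf.inner_gradient_add_le_sub hg y
  have hyx := hf.inner_gradient_add_le_sub hg' x
  rw [← neg_sub x y, norm_neg, inner_neg_right] at hxy
  rw [inner_sub_left]
  linarith

end Gradient

theorem smul_sub_eq_sub_of_eq_div_smul_add_div_smul {K V : Type*} [Field K] [AddCommGroup V]
    [Module K V] {s : K} (hs : 1 + s ≠ 0) {u y z : V}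
    (hz : z = (1 / (1 + s)) • u + (s / (1 + s)) • y) : (1 + s) • (z - y) = u - y := by
  rw [hz, smul_sub, smul_add, smul_smul, smul_smul, mul_one_div_cancel hs, mul_div_cancel₀ _ hs,
    one_smul, add_smul, one_smul]
  abel

section QNPE

variable {E : Type*} [NormedAddCommGroup E] [InnerProductSpace ℝ E]

/-- The QNPE iterate `x_{k+1}` computed from `x = x_k`, `xh = x̂_k`, `g = ∇f(x̂_k)`, `η = η_k`. -/
noncomputable def qnpeUpdate (η μ : ℝ) (g x xh : E) : E :=
  (1 / (1 + 2 * η * μ)) • (x - η • g) + ((2 * η * μ) / (1 + 2 * η * μ)) • xh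

theorem norm_qnpeUpdate_sub_sq_le {η μ α : ℝ} {g x xh xs : E} (hη : 0 ≤ η) (hμ : 0 ≤ μ)
    (hmono : μ * ‖xh - xs‖ ^ 2 ≤ ⟪g, xh - xs⟫)
    (happrox : ‖xh - x + η • g‖ ≤ α * ‖xh - x‖) :
    ‖qnpeUpdate η μ g x xh - xs‖ ^ 2 ≤ ‖x - xs‖ ^ 2 - (1 - α ^ 2) * ‖xh - x‖ ^ 2 := by
  set x' := qnpeUpdate η μ g x xh with hx'_def
  set s := 2 * η * μ
  have hs : 0 ≤ s := by positivity
  have hq : η • g = -((1 + s) • (x' - xh)) - (xh - x) := by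
    rw [smul_sub_eq_sub_of_eq_div_smul_add_div_smul (by positivity) hx'_def]
    abel
  have hgrad : η * ⟪g, xh - xs⟫ = -(1 + s) * ⟪xh - xs, x' - xh⟫ - ⟪xh - xs, xh - x⟫ := by
    rw [← real_inner_smul_left, hq, inner_sub_left, inner_neg_left, real_inner_smul_left,
      real_inner_comm (xh - xs), real_inner_comm (xh - xs)]
    ring
  have hshrink : (1 + s) * ‖x' - xh‖ ^ 2 ≤ α ^ 2 * ‖xh - x‖ ^ 2 := by
    have hnorm : (1 + s) * ‖x' - xh‖ ≤ α * ‖xh - x‖ := by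
      have he : xh - x + η • g = -((1 + s) • (x' - xh)) := by rw [hq]; abel
      rwa [he, norm_neg, norm_smul, Real.norm_of_nonneg (by positivity)] at happrox
    calc (1 + s) * ‖x' - xh‖ ^ 2 ≤ ((1 + s) * ‖x' - xh‖) ^ 2 := by nlinarith [sq_nonneg ‖x' - xh‖]
      _ ≤ (α * ‖xh - x‖) ^ 2 := pow_le_pow_left₀ (by positivity) hnorm 2
      _ = α ^ 2 * ‖xh - x‖ ^ 2 := by ring
  have hx : x - xs = (xh - xs) - (xh - x) := by abel
  have hx' : x' - xs = (xh - xs) + (x' - xh) := by abel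
  have hpos := mul_nonneg hs (sq_nonneg ‖x' - xs‖)
  rw [hx, norm_sub_sq_real (xh - xs)]
  rw [hx', norm_add_sq_real] at hpos ⊢
  linarith [mul_le_mul_of_nonneg_left hmono hη]

end QNPE

/-- Summability of the squared displacements of the QNPE iterates:
`Σ_{k<N} ‖x̂_k − x_k‖² ≤ ‖x_0 − x*‖² / (1 − α)`. -/
theorem qnpe_sum_of_squares {d : ℕ} (N : ℕ) (μ α : ℝ) (η : ℕ → ℝ)
    (f : EuclideanSpace ℝ (Fin d) → ℝ)
    (gf : EuclideanSpace ℝ (Fin d) → EuclideanSpace ℝ (Fin d))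
    (xstar : EuclideanSpace ℝ (Fin d))
    (x xh : ℕ → EuclideanSpace ℝ (Fin d))
    (hμ : 0 < μ) (hα0 : 0 < α) (hα1 : α < 1)
    (hgrad : ∀ z, HasGradientAt f (gf z) z)
    (hsc : StrongConvexOn Set.univ μ f)
    (hmin : ∀ y, f xstar ≤ f y)
    (hη : ∀ k < N, 0 < η k)
    (happrox : ∀ k < N, ‖xh k - x k + η k • gf (xh k)‖ ≤ α * ‖xh k - x k‖)
    (hupdate : ∀ k < N, x (k + 1) = (1 / (1 + 2 * η k * μ)) • (x k - η k • gf (xh k))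
        + ((2 * η k * μ) / (1 + 2 * η k * μ)) • xh k) :
    ∑ k ∈ Finset.range N, ‖xh k - x k‖ ^ 2 ≤ ‖x 0 - xstar‖ ^ 2 / (1 - α) := by
  have hgrad_min : gf xstar = 0 :=
    IsLocalMin.hasGradientAt_eq_zero (Filter.Eventually.of_forall hmin) (hgrad xstar)
  have hdescent : ∀ k ∈ Finset.range N,
      (1 - α) * ‖xh k - x k‖ ^ 2 ≤ ‖x k - xstar‖ ^ 2 - ‖x (k + 1) - xstar‖ ^ 2 := by
    intro k hkN
    have hk := Finset.mem_range.mp hkN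
    have hmono := hsc.mul_norm_sub_sq_le_inner_gradient_sub (hgrad (xh k)) (hgrad xstar)
    rw [hgrad_min, sub_zero] at hmono
    have hstep : ‖x (k + 1) - xstar‖ ^ 2 ≤ ‖x k - xstar‖ ^ 2 - (1 - α ^ 2) * ‖xh k - x k‖ ^ 2 :=
      hupdate k hk ▸ norm_qnpeUpdate_sub_sq_le (hη k hk).le hμ.le hmono (happrox k hk)
    linarith [mul_nonneg (mul_nonneg hα0.le (sub_nonneg.mpr hα1.le)) (sq_nonneg ‖xh k - x k‖)]
  have hsum := Finset.sum_le_sum hdescent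
  rw [Finset.sum_range_sub' (fun k => ‖x k - xstar‖ ^ 2), ← Finset.mul_sum] at hsum
  rw [le_div_iff₀ (sub_pos.mpr hα1), mul_comm]
  linarith [sq_nonneg ‖x N - xstar‖]
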